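/- Let φ be a set of UTVPI constraints whose constraint graph G_φ has no negative weight cycle, and suppose φ is unsatisfiable in ℤ. Then G_φ contains a zero weight cycle that contains two vertices u and −u such that wSP(u,−u) is odd. -/

import Mathlib

namespace UTVPIPaper

/-- A linear integer constraint `f ≤ bound`, where `f` is a finitely supported
integer linear form over the variables `X`. -/
structure UC (X : Type*) where
  f : X →₀ ℤ
  bound : ℤ

variable {X : Type*}

/-- `c` is a UTVPI constraint, i.e. of the form `a·x + b·y ≤ d` with `a, b ∈ {-1, 0, 1}`. -/
def UC.IsUTVPI (c : UC X) : Prop :=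
  ∃ (a b : ℤ) (x y : X), (a = -1 ∨ a = 0 ∨ a = 1) ∧ (b = -1 ∨ b = 0 ∨ b = 1) ∧
    c.f = Finsupp.single x a + Finsupp.single y b

/-- The constraint `c` holds under the integer assignment `v`. -/
def UC.holds (v : X → ℤ) (c : UC X) : Prop :=
  (c.f.sum fun x a => a * v x) ≤ c.bound

/-- The assignment `v` satisfies all constraints of `φ`. -/
def Sat (v : X → ℤ) (φ : Set (UC X)) : Prop := ∀ c ∈ φ, c.holds v

/-- `φ` is satisfiable in ℤ. -/
def SatZ (φ : Set (UC X)) : Prop := ∃ v : X → ℤ, Sat v φ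

/-- The constraint `c` holds under the rational assignment `v`. -/
def UC.holdsQ (v : X → ℚ) (c : UC X) : Prop :=
  (c.f.sum fun x a => (a : ℚ) * v x) ≤ (c.bound : ℚ)

/-- `φ` is satisfiable in ℚ. -/
def SatQ (φ : Set (UC X)) : Prop := ∃ v : X → ℚ, ∀ c ∈ φ, c.holdsQ v

/-- The transitive closure `TC(φ)`: the smallest set containing `φ` closed under
the rule: `a·x - c·y ≤ d₁` and `c·y + b·z ≤ d₂` imply `a·x + b·z ≤ d₁ + d₂`,
for `a, b ∈ {-1,0,1}` and `c ∈ {-1,1}`. -/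
inductive TC (φ : Set (UC X)) : UC X → Prop
  | base {c : UC X} : c ∈ φ → TC φ c
  | trans {a b c : ℤ} {x y z : X} {d₁ d₂ : ℤ} :
      (a = -1 ∨ a = 0 ∨ a = 1) → (b = -1 ∨ b = 0 ∨ b = 1) → (c = -1 ∨ c = 1) →
      TC φ ⟨Finsupp.single x a - Finsupp.single y c, d₁⟩ →
      TC φ ⟨Finsupp.single y c + Finsupp.single z b, d₂⟩ →
      TC φ ⟨Finsupp.single x a + Finsupp.single z b, d₁ + d₂⟩

/-- The tightened closure `TI(φ)`: the smallest set containing `φ` closed under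
the rule: `a·x + a·x ≤ d` implies `a·x ≤ ⌊d/2⌋`, for `a ∈ {-1,1}`. -/
inductive TI (φ : Set (UC X)) : UC X → Prop
  | base {c : UC X} : c ∈ φ → TI φ c
  | tighten {a : ℤ} {x : X} {d : ℤ} :
      (a = -1 ∨ a = 1) →
      TI φ ⟨Finsupp.single x a + Finsupp.single x a, d⟩ →
      TI φ ⟨Finsupp.single x a, Int.fdiv d 2⟩

/-- The tightened transitive closure `TTC(φ)`: the smallest set containing `φ`
closed under both the transitivity and the tightening rules. -/
inductive TTC (φ : Set (UC X)) : UC X → Prop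
  | base {c : UC X} : c ∈ φ → TTC φ c
  | trans {a b c : ℤ} {x y z : X} {d₁ d₂ : ℤ} :
      (a = -1 ∨ a = 0 ∨ a = 1) → (b = -1 ∨ b = 0 ∨ b = 1) → (c = -1 ∨ c = 1) →
      TTC φ ⟨Finsupp.single x a - Finsupp.single y c, d₁⟩ →
      TTC φ ⟨Finsupp.single y c + Finsupp.single z b, d₂⟩ →
      TTC φ ⟨Finsupp.single x a + Finsupp.single z b, d₁ + d₂⟩
  | tighten {a : ℤ} {x : X} {d : ℤ} :
      (a = -1 ∨ a = 1) →
      TTC φ ⟨Finsupp.single x a + Finsupp.single x a, d⟩ →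
      TTC φ ⟨Finsupp.single x a, Int.fdiv d 2⟩

/-- Vertices of the constraint graph: `(true, x)` is `x⁺` and `(false, x)` is `x⁻`. -/
abbrev Vtx (X : Type*) := Bool × X

/-- The counterpart `-u` of a vertex `u`. -/
def vneg (u : Vtx X) : Vtx X := (!u.1, u.2)

/-- The set of edges `E(c)` associated with a UTVPI constraint `c`
(the transformation table):
`x - y ≤ d` gives `(y⁺, x⁺, d)` and `(x⁻, y⁻, d)`;
`x + y ≤ d` gives `(y⁻, x⁺, d)` and `(x⁻, y⁺, d)`;
`-x - y ≤ d` gives `(y⁺, x⁻, d)` and `(x⁺, y⁻, d)`;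
`x ≤ d` gives `(x⁻, x⁺, 2d)`; `-x ≤ d` gives `(x⁺, x⁻, 2d)`. -/
def cedges (c : UC X) : Set (Vtx X × Vtx X × ℤ) :=
  { e | ∃ (x y : X) (d : ℤ),
      (c = ⟨Finsupp.single x 1 - Finsupp.single y 1, d⟩ ∧
        (e = ((true, y), (true, x), d) ∨ e = ((false, x), (false, y), d))) ∨
      (c = ⟨Finsupp.single x 1 + Finsupp.single y 1, d⟩ ∧
        (e = ((false, y), (true, x), d) ∨ e = ((false, x), (true, y), d))) ∨
      (c = ⟨-Finsupp.single x 1 - Finsupp.single y 1, d⟩ ∧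
        (e = ((true, y), (false, x), d) ∨ e = ((true, x), (false, y), d))) ∨
      (c = ⟨Finsupp.single x 1, d⟩ ∧ e = ((false, x), (true, x), 2 * d)) ∨
      (c = ⟨-Finsupp.single x 1, d⟩ ∧ e = ((true, x), (false, x), 2 * d)) }

/-- The constraint graph `G_φ` of a set `φ` of UTVPI constraints. -/
def Gr (φ : Set (UC X)) : Set (Vtx X × Vtx X × ℤ) := { e | ∃ c ∈ φ, e ∈ cedges c }

/-- `IsPath E u p v`: `p` is a path (a sequence of consecutive weighted edges,
each belonging to the edge set `E`) from vertex `u` to vertex `v`. -/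
inductive IsPath {V : Type*} (E : Set (V × V × ℤ)) : V → List (V × V × ℤ) → V → Prop
  | nil (v : V) : IsPath E v [] v
  | cons {u v w : V} {d : ℤ} {p : List (V × V × ℤ)} :
      (u, v, d) ∈ E → IsPath E v p w → IsPath E u ((u, v, d) :: p) w

/-- The weight of a path: the sum of the weights of its edges. -/
def pweight {V : Type*} (p : List (V × V × ℤ)) : ℤ := (p.map fun e => e.2.2).sum

/-- The graph `E` has no negative weight cycle. -/
def NoNegCycle {V : Type*} (E : Set (V × V × ℤ)) : Prop :=
  ∀ (v : V) (p : List (V × V × ℤ)), IsPath E v p v → 0 ≤ pweight p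

/-- `wSP E u v` is the minimum weight of a path from `u` to `v` in `E`
(`⊤` if no path exists). -/
noncomputable def wSP {V : Type*} (E : Set (V × V × ℤ)) (u v : V) : WithTop ℤ :=
  sInf {w : WithTop ℤ | ∃ p, IsPath E u p v ∧ (pweight p : WithTop ℤ) = w}

/-- The bounds function `ρ(u) = ⌊wSP(u, -u) / 2⌋` (`⊤` if there is no path from `u` to `-u`). -/
noncomputable def rho (φ : Set (UC X)) (u : Vtx X) : WithTop ℤ :=
  (wSP (Gr φ) u (vneg u)).map fun w => Int.fdiv w 2


/-! ### Path basics -/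
section Paths
variable {V : Type*} {E : Set (V × V × ℤ)} {u v w : V} {p q : List (V × V × ℤ)}

lemma pweight_nil : pweight ([] : List (V × V × ℤ)) = 0 := rfl

lemma pweight_cons (e : V × V × ℤ) (p : List (V × V × ℤ)) :
    pweight (e :: p) = e.2.2 + pweight p := by simp [pweight]

lemma pweight_append (p q : List (V × V × ℤ)) :
    pweight (p ++ q) = pweight p + pweight q := by simp [pweight]

lemma IsPath.append (hp : IsPath E u p v) (hq : IsPath E v q w) :
    IsPath E u (p ++ q) w := by
  induction hp with
  | nil => simpa using hq
  | cons he _ ih => exact IsPath.cons he (ih hq)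

lemma IsPath.mem_edges (hp : IsPath E u p v) : ∀ e ∈ p, e ∈ E := by
  induction hp with
  | nil => simp
  | cons he _ ih => intro e hep; rcases List.mem_cons.1 hep with h | h
                    · subst h; exact he
                    · exact ih e h

lemma IsPath.single {d : ℤ} (he : (u, v, d) ∈ E) : IsPath E u [(u, v, d)] v :=
  (IsPath.cons he (IsPath.nil v) : _)

lemma IsPath.split (hp : IsPath E u p v) (a : V)
    (ha : a ∈ p.map (fun e => e.1)) :
    ∃ p₁ p₂, p = p₁ ++ p₂ ∧ IsPath E u p₁ a ∧ IsPath E a p₂ v := by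
  induction hp with
  | nil => simp at ha
  | @cons u' v' w' d p' he hp' ih =>
    rcases List.mem_map.1 ha with ⟨e, hep, hee⟩
    rcases List.mem_cons.1 hep with h | h
    · subst h
      exact ⟨[], _, rfl, by simpa [← hee] using IsPath.nil a,
        by simpa [← hee] using IsPath.cons he hp'⟩
    · rcases ih (List.mem_map.2 ⟨e, h, hee⟩) with ⟨p₁, p₂, hpe, h1, h2⟩
      exact ⟨_ :: p₁, p₂, by simp [hpe], IsPath.cons he h1, h2⟩

/-- De-cycling: with no negative cycle, every path dominates a path whose
sources are Nodup. -/
lemma IsPath.reduce (hnnc : NoNegCycle E) (hp : IsPath E u p v) :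
    ∃ q, IsPath E u q v ∧ pweight q ≤ pweight p ∧ (q.map (fun e => e.1)).Nodup := by
  induction hp with
  | nil => exact ⟨[], IsPath.nil _, le_rfl, by simp⟩
  | @cons u' v' w' d p' he hp' ih =>
    rcases ih with ⟨q', hq', hwq', hnd⟩
    by_cases hu : u' ∈ q'.map (fun e => e.1)
    · rcases hq'.split u' hu with ⟨q₁, q₂, hqe, h1, h2⟩
      refine ⟨q₂, h2, ?_, ?_⟩
      · have hcyc : IsPath E u' ((u', v', d) :: q₁) u' := IsPath.cons he h1
        have h0 : 0 ≤ pweight ((u', v', d) :: q₁) := hnnc _ _ hcyc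
        rw [pweight_cons] at h0
        have : pweight q' = pweight q₁ + pweight q₂ := by rw [hqe, pweight_append]
        rw [pweight_cons]
        omega
      · rw [hqe, List.map_append] at hnd
        exact hnd.of_append_right
    · refine ⟨(u', v', d) :: q', IsPath.cons he hq', ?_, ?_⟩
      · rw [pweight_cons, pweight_cons]; omega
      · simpa [hu] using hnd

end Paths

section Mono
variable {V : Type*} {E E' : Set (V × V × ℤ)} {u v : V} {p : List (V × V × ℤ)}

lemma IsPath.mono (hEE : E ⊆ E') (hp : IsPath E u p v) : IsPath E' u p v := by
  induction hp with
  | nil => exact IsPath.nil _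
  | cons he _ ih => exact IsPath.cons (hEE he) ih

end Mono
/-! ### Weight sets and `wSP` -/
section WSP
variable {V : Type*}

/-- The set of integer weights of paths from `u` to `v`. -/
def Wset (E : Set (V × V × ℤ)) (u v : V) : Set ℤ :=
  {w | ∃ p, IsPath E u p v ∧ pweight p = w}

variable {E : Set (V × V × ℤ)} {u v : V} {t : ℤ}

lemma wSP_set_eq (E : Set (V × V × ℤ)) (u v : V) :
    {w : WithTop ℤ | ∃ p, IsPath E u p v ∧ (pweight p : WithTop ℤ) = w}
      = (fun a : ℤ => (a : WithTop ℤ)) '' Wset E u v := by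
  ext w
  constructor
  · rintro ⟨p, hp, rfl⟩; exact ⟨pweight p, ⟨p, hp, rfl⟩, rfl⟩
  · rintro ⟨a, ⟨p, hp, hw⟩, rfl⟩; exact ⟨p, hp, by rw [hw]⟩

lemma wSP_eq_coe (hne : (Wset E u v).Nonempty) (hbd : BddBelow (Wset E u v)) :
    wSP E u v = ((sInf (Wset E u v) : ℤ) : WithTop ℤ) := by
  rw [wSP, wSP_set_eq, ← WithTop.coe_sInf' hne hbd]

lemma wSP_eq_coe_elim (h : wSP E u v = (t : WithTop ℤ)) :
    (Wset E u v).Nonempty ∧ BddBelow (Wset E u v) ∧ sInf (Wset E u v) = t := by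
  rw [wSP, wSP_set_eq] at h
  set S := (fun a : ℤ => (a : WithTop ℤ)) '' Wset E u v with hS
  by_cases hc : S ⊆ {⊤} ∨ ¬BddBelow S
  · exfalso
    have htop : sInf S = ⊤ := by
      classical
      show (if S ⊆ {⊤} ∨ ¬BddBelow S then ⊤
        else ((sInf ((fun (a : ℤ) ↦ (a : WithTop ℤ)) ⁻¹' S) : ℤ) : WithTop ℤ)) = ⊤
      exact if_pos hc
    rw [htop] at h
    exact WithTop.coe_ne_top h.symm
  push_neg at hc
  obtain ⟨h1, h2⟩ := hc
  have hne : (Wset E u v).Nonempty := by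
    by_contra hemp
    rw [Set.not_nonempty_iff_eq_empty] at hemp
    exact h1 (by rw [hS, hemp, Set.image_empty]; exact Set.empty_subset _)
  have hbd : BddBelow (Wset E u v) := by
    obtain ⟨b, hb⟩ := h2
    obtain ⟨a, ha⟩ := hne
    cases b with
    | top =>
      exact absurd (hb (Set.mem_image_of_mem _ ha)) (by simp)
    | coe b₀ =>
      exact ⟨b₀, fun w hw => by exact_mod_cast hb (Set.mem_image_of_mem _ hw)⟩
  refine ⟨hne, hbd, ?_⟩
  rw [← WithTop.coe_sInf' hne hbd] at h
  exact_mod_cast h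

end WSP

/-! ### Symmetry -/
section Symm
variable {X : Type*}

/-- The edge set is symmetric under `(a,b,d) ↦ (-b,-a,d)`. -/
def SymE (E : Set (Vtx X × Vtx X × ℤ)) : Prop :=
  ∀ a b d, (a, b, d) ∈ E → (vneg b, vneg a, d) ∈ E

@[simp] lemma vneg_vneg (u : Vtx X) : vneg (vneg u) = u := by
  cases u; simp [vneg]

lemma IsPath.symmPath {E : Set (Vtx X × Vtx X × ℤ)} (hsym : SymE E)
    {u v : Vtx X} {p : List (Vtx X × Vtx X × ℤ)} (hp : IsPath E u p v) :
    ∃ q, IsPath E (vneg v) q (vneg u) ∧ pweight q = pweight p := by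
  induction hp with
  | nil => exact ⟨[], IsPath.nil _, rfl⟩
  | @cons u' v' w' d p' he _ ih =>
    obtain ⟨q, hq, hwq⟩ := ih
    refine ⟨q ++ [(vneg v', vneg u', d)], hq.append (IsPath.single (hsym _ _ _ he)), ?_⟩
    rw [pweight_append, pweight_cons, pweight_cons, pweight_nil, hwq]
    ring

end Symm
/-! ### The pinning step -/
section Pin
variable {X : Type*}

/-- No "odd zero situation". -/
def NoOddZero (E : Set (Vtx X × Vtx X × ℤ)) : Prop :=
  ∀ (u : Vtx X) (t : ℤ), Odd t → wSP E u (vneg u) = (t : WithTop ℤ) →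
    wSP E (vneg u) u = ((-t : ℤ) : WithTop ℤ) → False

/-- All weight sets are bounded below. -/
def BddAll (E : Set (Vtx X × Vtx X × ℤ)) : Prop :=
  ∀ u v : Vtx X, BddBelow (Wset E u v)

structure GoodE (E : Set (Vtx X × Vtx X × ℤ)) : Prop where
  sym : SymE E
  nonneg : NoNegCycle E
  bdd : BddAll E
  inv : NoOddZero E

variable {E : Set (Vtx X × Vtx X × ℤ)} {P : Vtx X} {m : ℤ}

/-- Choice of an even pin value `m`. -/
lemma choose_m (hE : GoodE E) (P : Vtx X) :
    ∃ m : ℤ, Even m ∧ (∀ q, IsPath E (vneg P) q P → -m ≤ pweight q) ∧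
      (∀ r, IsPath E P r (vneg P) → m ≤ pweight r) := by
  by_cases hPQe : (Wset E P (vneg P)).Nonempty
  · have hbd := hE.bdd P (vneg P)
    obtain ⟨pt, hpt, hwt⟩ := Int.csInf_mem hPQe hbd
    set t := sInf (Wset E P (vneg P)) with ht
    have hPQ : ∀ r, IsPath E P r (vneg P) → t ≤ pweight r := fun r hr =>
      csInf_le hbd ⟨r, hr, rfl⟩
    have hQPt : ∀ q, IsPath E (vneg P) q P → -t ≤ pweight q := by
      intro q hq
      have h0 := hE.nonneg P (pt ++ q) (hpt.append hq)
      rw [pweight_append, hwt] at h0; omega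
    by_cases hev : Even t
    · exact ⟨t, hev, hQPt, hPQ⟩
    · have hodd : Odd t := Int.not_even_iff_odd.mp hev
      refine ⟨t - 1, ?_, ?_, fun r hr => by have := hPQ r hr; omega⟩
      · obtain ⟨k, hk⟩ := hodd; exact ⟨k, by omega⟩
      · intro q hq
        have h1 := hQPt q hq
        by_contra hlt
        push_neg at hlt
        have hqw : pweight q = -t := by omega
        have hQPne : (Wset E (vneg P) P).Nonempty := ⟨pweight q, q, hq, rfl⟩
        have hbd' := hE.bdd (vneg P) P
        have hle : sInf (Wset E (vneg P) P) ≤ -t := csInf_le hbd' ⟨q, hq, hqw⟩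
        have hge : -t ≤ sInf (Wset E (vneg P) P) :=
          le_csInf hQPne (by rintro w ⟨q', hq', rfl⟩; exact hQPt q' hq')
        have h2 : wSP E (vneg P) P = ((-t : ℤ) : WithTop ℤ) := by
          rw [wSP_eq_coe hQPne hbd']
          congr 1; omega
        have h3 : wSP E P (vneg P) = (t : WithTop ℤ) := wSP_eq_coe hPQe hbd
        exact hE.inv P t hodd h3 h2
  · by_cases hQPe : (Wset E (vneg P) P).Nonempty
    · have hbd' := hE.bdd (vneg P) P
      set s := sInf (Wset E (vneg P) P) with hs
      have hQPt : ∀ q, IsPath E (vneg P) q P → s ≤ pweight q := fun q hq =>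
        csInf_le hbd' ⟨q, hq, rfl⟩
      have hvac : ∀ r, IsPath E P r (vneg P) → False := fun r hr =>
        hPQe ⟨pweight r, r, hr, rfl⟩
      by_cases hev : Even s
      · exact ⟨-s, hev.neg, fun q hq => by have := hQPt q hq; omega,
          fun r hr => (hvac r hr).elim⟩
      · obtain ⟨k, hk⟩ := Int.not_even_iff_odd.mp hev
        exact ⟨1 - s, ⟨-k, by omega⟩, fun q hq => by have := hQPt q hq; omega,
          fun r hr => (hvac r hr).elim⟩
    · exact ⟨0, Even.zero,
        fun q hq => (hQPe ⟨pweight q, q, hq, rfl⟩).elim,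
        fun r hr => (hPQe ⟨pweight r, r, hr, rfl⟩).elim⟩

/-- Path surgery in the extended graph. -/
lemma surgery {V : Type*} {E : Set (V × V × ℤ)} {P Q : V} {m : ℤ}
    (hnn : NoNegCycle E)
    (hQP : ∀ q, IsPath E Q q P → -m ≤ pweight q)
    (hPQ : ∀ r, IsPath E P r Q → m ≤ pweight r)
    {u v : V} {p : List (V × V × ℤ)}
    (hp : IsPath (insert (P, Q, m) (insert (Q, P, -m) E)) u p v) :
    (∃ q, IsPath E u q v ∧ pweight q ≤ pweight p) ∨
    (∃ r q, IsPath E u r P ∧ IsPath E Q q v ∧ pweight r + m + pweight q ≤ pweight p) ∨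
    (∃ r q, IsPath E u r Q ∧ IsPath E P q v ∧ pweight r - m + pweight q ≤ pweight p) := by
  induction hp with
  | nil w => exact Or.inl ⟨[], IsPath.nil w, le_rfl⟩
  | @cons a b c d p' he hp' ih =>
    have hpc : pweight ((a, b, d) :: p') = d + pweight p' := by simp [pweight]
    simp only [Set.mem_insert_iff, Prod.mk.injEq] at he
    rcases he with ⟨rfl, rfl, rfl⟩ | ⟨rfl, rfl, rfl⟩ | he
    · -- the edge (P, Q, m)
      rcases ih with ⟨q, hq, hwq⟩ | ⟨r, q, hr, hq, hw⟩ | ⟨r, q, hr, hq, hw⟩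
      · exact Or.inr (Or.inl ⟨[], q, IsPath.nil _, hq, by rw [pweight_nil]; omega⟩)
      · have := hQP r hr
        exact Or.inr (Or.inl ⟨[], q, IsPath.nil _, hq, by rw [pweight_nil]; omega⟩)
      · have := hnn _ r hr
        exact Or.inl ⟨q, hq, by omega⟩
    · -- the edge (Q, P, -m)
      rcases ih with ⟨q, hq, hwq⟩ | ⟨r, q, hr, hq, hw⟩ | ⟨r, q, hr, hq, hw⟩
      · exact Or.inr (Or.inr ⟨[], q, IsPath.nil _, hq, by rw [pweight_nil]; omega⟩)
      · have := hnn _ r hr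
        exact Or.inl ⟨q, hq, by omega⟩
      · have := hPQ r hr
        exact Or.inr (Or.inr ⟨[], q, IsPath.nil _, hq, by rw [pweight_nil]; omega⟩)
    · -- an old edge
      have hpc2 : ∀ (q : List (V × V × ℤ)), pweight ((a, b, d) :: q) = d + pweight q :=
        fun q => by simp [pweight]
      rcases ih with ⟨q, hq, hwq⟩ | ⟨r, q, hr, hq, hw⟩ | ⟨r, q, hr, hq, hw⟩
      · exact Or.inl ⟨_ :: q, IsPath.cons he hq, by rw [hpc2]; omega⟩
      · exact Or.inr (Or.inl ⟨_ :: r, q, IsPath.cons he hr, hq, by rw [hpc2]; omega⟩)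
      · exact Or.inr (Or.inr ⟨_ :: r, q, IsPath.cons he hr, hq, by rw [hpc2]; omega⟩)

end Pin
/-! ### Preservation of `GoodE` under pinning -/
section Preserve
variable {X : Type*} {E : Set (Vtx X × Vtx X × ℤ)}

lemma key_step (hE : GoodE E) {P : Vtx X} {m : ℤ} (hev : Even m)
    (hQP : ∀ q, IsPath E (vneg P) q P → -m ≤ pweight q)
    (hPQ : ∀ r, IsPath E P r (vneg P) → m ≤ pweight r)
    {w : Vtx X} {σ : ℤ} (hσ : Odd σ)
    (h : wSP (insert (P, vneg P, m) (insert (vneg P, P, -m) E)) w (vneg w)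
      = (σ : WithTop ℤ)) :
    ∃ q, IsPath E w q (vneg w) ∧ pweight q ≤ σ := by
  set E' := insert (P, vneg P, m) (insert (vneg P, P, -m) E) with hEdef
  have hsub : E ⊆ E' := fun e he => Set.mem_insert_of_mem _ (Set.mem_insert_of_mem _ he)
  have hePQ : (P, vneg P, m) ∈ E' := Set.mem_insert _ _
  have heQP : (vneg P, P, -m) ∈ E' := Set.mem_insert_of_mem _ (Set.mem_insert _ _)
  obtain ⟨hne, hbd, hinf⟩ := wSP_eq_coe_elim h
  obtain ⟨p, hp, hwp⟩ := Int.csInf_mem hne hbd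
  rw [hinf] at hwp
  obtain ⟨k, hk⟩ := hev
  obtain ⟨j, hj⟩ := hσ
  rcases surgery hE.nonneg hQP hPQ hp with
    ⟨q, hq, hwq⟩ | ⟨r, q, hr, hq, hw⟩ | ⟨r, q, hr, hq, hw⟩
  · exact ⟨q, hq, by omega⟩
  · exfalso
    obtain ⟨r', hr', hwr'⟩ := hr.symmPath hE.sym
    obtain ⟨q', hq', hwq'⟩ := hq.symmPath hE.sym
    simp only [vneg_vneg] at hq'
    have hp1 : IsPath E' w (r ++ (P, vneg P, m) :: r') (vneg w) :=
      (hr.mono hsub).append (IsPath.cons hePQ (hr'.mono hsub))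
    have hp2 : IsPath E' w (q' ++ (P, vneg P, m) :: q) (vneg w) :=
      (hq'.mono hsub).append (IsPath.cons hePQ (hq.mono hsub))
    have hs1 : σ ≤ pweight (r ++ (P, vneg P, m) :: r') := by
      rw [← hinf]; exact csInf_le hbd ⟨_, hp1, rfl⟩
    have hs2 : σ ≤ pweight (q' ++ (P, vneg P, m) :: q) := by
      rw [← hinf]; exact csInf_le hbd ⟨_, hp2, rfl⟩
    have hw1 : pweight (r ++ (P, vneg P, m) :: r') = pweight r + m + pweight r' := by
      rw [pweight_append, pweight_cons]; ring
    have hw2 : pweight (q' ++ (P, vneg P, m) :: q) = pweight q' + m + pweight q := by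
      rw [pweight_append, pweight_cons]; ring
    omega
  · exfalso
    obtain ⟨r', hr', hwr'⟩ := hr.symmPath hE.sym
    simp only [vneg_vneg] at hr'
    obtain ⟨q', hq', hwq'⟩ := hq.symmPath hE.sym
    simp only [vneg_vneg] at hq'
    have hp1 : IsPath E' w (r ++ (vneg P, P, -m) :: r') (vneg w) :=
      (hr.mono hsub).append (IsPath.cons heQP (hr'.mono hsub))
    have hp2 : IsPath E' w (q' ++ (vneg P, P, -m) :: q) (vneg w) :=
      (hq'.mono hsub).append (IsPath.cons heQP (hq.mono hsub))
    have hs1 : σ ≤ pweight (r ++ (vneg P, P, -m) :: r') := by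
      rw [← hinf]; exact csInf_le hbd ⟨_, hp1, rfl⟩
    have hs2 : σ ≤ pweight (q' ++ (vneg P, P, -m) :: q) := by
      rw [← hinf]; exact csInf_le hbd ⟨_, hp2, rfl⟩
    have hw1 : pweight (r ++ (vneg P, P, -m) :: r') = pweight r + -m + pweight r' := by
      rw [pweight_append, pweight_cons]; ring
    have hw2 : pweight (q' ++ (vneg P, P, -m) :: q) = pweight q' + -m + pweight q := by
      rw [pweight_append, pweight_cons]; ring
    omega

lemma goodE_pin (hE : GoodE E) (P : Vtx X) :
    ∃ m : ℤ, Even m ∧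
      GoodE (insert (P, vneg P, m) (insert (vneg P, P, -m) E)) := by
  obtain ⟨m, hev, hQP, hPQ⟩ := choose_m hE P
  refine ⟨m, hev, ?_, ?_, ?_, ?_⟩
  · -- symmetry
    intro a b d hmem
    simp only [Set.mem_insert_iff, Prod.mk.injEq] at hmem ⊢
    rcases hmem with ⟨rfl, rfl, rfl⟩ | ⟨rfl, rfl, rfl⟩ | hmem
    · exact Or.inl ⟨(vneg_vneg _).symm ▸ rfl, rfl, rfl⟩
    · exact Or.inr (Or.inl ⟨rfl, (vneg_vneg _).symm ▸ rfl, rfl⟩)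
    · exact Or.inr (Or.inr (hE.sym _ _ _ hmem))
  · -- no negative cycle
    intro v p hp
    rcases surgery hE.nonneg hQP hPQ hp with
      ⟨q, hq, hwq⟩ | ⟨r, q, hr, hq, hw⟩ | ⟨r, q, hr, hq, hw⟩
    · have := hE.nonneg v q hq; omega
    · have := hQP _ (hq.append hr)
      rw [pweight_append] at this; omega
    · have := hPQ _ (hq.append hr)
      rw [pweight_append] at this; omega
  · -- bounded below
    intro u v
    obtain ⟨b1, hb1⟩ := hE.bdd u v
    obtain ⟨b2, hb2⟩ := hE.bdd u P
    obtain ⟨b3, hb3⟩ := hE.bdd (vneg P) v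
    obtain ⟨b4, hb4⟩ := hE.bdd u (vneg P)
    obtain ⟨b5, hb5⟩ := hE.bdd P v
    refine ⟨min b1 (min (b2 + m + b3) (b4 - m + b5)), ?_⟩
    rintro w ⟨p, hp, rfl⟩
    rcases surgery hE.nonneg hQP hPQ hp with
      ⟨q, hq, hwq⟩ | ⟨r, q, hr, hq, hw⟩ | ⟨r, q, hr, hq, hw⟩
    · have := hb1 ⟨q, hq, rfl⟩
      omega
    · have h2 := hb2 ⟨r, hr, rfl⟩
      have h3 := hb3 ⟨q, hq, rfl⟩
      omega
    · have h4 := hb4 ⟨r, hr, rfl⟩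
      have h5 := hb5 ⟨q, hq, rfl⟩
      omega
  · -- no odd zero situation
    intro u τ hτ h1 h2
    obtain ⟨p₁, hp₁, hw₁⟩ := key_step hE hev hQP hPQ hτ h1
    have h2' : wSP (insert (P, vneg P, m) (insert (vneg P, P, -m) E))
        (vneg u) (vneg (vneg u)) = ((-τ : ℤ) : WithTop ℤ) := by
      rw [vneg_vneg]; exact h2
    obtain ⟨p₂, hp₂, hw₂⟩ := key_step hE hev hQP hPQ hτ.neg h2'
    simp only [vneg_vneg] at hp₂
    have hne₁ : (Wset E u (vneg u)).Nonempty := ⟨_, p₁, hp₁, rfl⟩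
    have hne₂ : (Wset E (vneg u) u).Nonempty := ⟨_, p₂, hp₂, rfl⟩
    have hbd₁ := hE.bdd u (vneg u)
    have hbd₂ := hE.bdd (vneg u) u
    obtain ⟨q₁, hq₁, hwq₁⟩ := Int.csInf_mem hne₁ hbd₁
    obtain ⟨q₂, hq₂, hwq₂⟩ := Int.csInf_mem hne₂ hbd₂
    have hcyc := hE.nonneg u _ (hq₁.append hq₂)
    rw [pweight_append] at hcyc
    have hle₁ : sInf (Wset E u (vneg u)) ≤ pweight p₁ := csInf_le hbd₁ ⟨p₁, hp₁, rfl⟩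
    have hle₂ : sInf (Wset E (vneg u) u) ≤ pweight p₂ := csInf_le hbd₂ ⟨p₂, hp₂, rfl⟩
    have heq₁ : sInf (Wset E u (vneg u)) = τ := by omega
    have heq₂ : sInf (Wset E (vneg u) u) = -τ := by omega
    exact hE.inv u τ hτ (by rw [wSP_eq_coe hne₁ hbd₁, heq₁])
      (by rw [wSP_eq_coe hne₂ hbd₂, heq₂])

end Preserve
/-! ### `Gr φ` is symmetric and its weight sets are bounded below -/
section Base
variable {X : Type*}

lemma symE_Gr (φ : Set (UC X)) : SymE (Gr φ) := by
  rintro a b d ⟨c, hc, hec⟩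
  obtain ⟨x, y, d', hcase⟩ := hec
  refine ⟨c, hc, ?_⟩
  rcases hcase with ⟨hcf, he | he⟩ | ⟨hcf, he | he⟩ | ⟨hcf, he | he⟩ | ⟨hcf, he⟩ | ⟨hcf, he⟩ <;>
    simp only [Prod.mk.injEq] at he <;> obtain ⟨rfl, rfl, rfl⟩ := he
  · exact ⟨x, y, d, Or.inl ⟨hcf, Or.inr (by simp [vneg])⟩⟩
  · exact ⟨x, y, d, Or.inl ⟨hcf, Or.inl (by simp [vneg])⟩⟩
  · exact ⟨x, y, d, Or.inr (Or.inl ⟨hcf, Or.inr (by simp [vneg])⟩)⟩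
  · exact ⟨x, y, d, Or.inr (Or.inl ⟨hcf, Or.inl (by simp [vneg])⟩)⟩
  · exact ⟨x, y, d, Or.inr (Or.inr (Or.inl ⟨hcf, Or.inr (by simp [vneg])⟩))⟩
  · exact ⟨x, y, d, Or.inr (Or.inr (Or.inl ⟨hcf, Or.inl (by simp [vneg])⟩))⟩
  · exact ⟨x, y, d', Or.inr (Or.inr (Or.inr (Or.inl ⟨hcf, by simp [vneg]⟩)))⟩
  · exact ⟨x, y, d', Or.inr (Or.inr (Or.inr (Or.inr ⟨hcf, by simp [vneg]⟩)))⟩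

lemma bddAll_Gr (φ : Set (UC X)) (hfin : φ.Finite) (hnnc : NoNegCycle (Gr φ)) :
    BddAll (Gr φ) := by
  classical
  set S : Set X := ⋃ c ∈ φ, ↑c.f.support with hSdef
  have hS : S.Finite := hfin.biUnion (fun c _ => (c.f.support : Set X).toFinite)
  set D : Set ℤ := ⋃ c ∈ φ, {c.bound, 2 * c.bound} with hDdef
  have hD : D.Finite := hfin.biUnion (fun c _ => (Set.finite_singleton _).insert _)
  set F : Set (Vtx X × Vtx X × ℤ) :=
    ((Set.univ : Set Bool) ×ˢ S) ×ˢ (((Set.univ : Set Bool) ×ˢ S) ×ˢ D) with hFdef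
  have hF : F.Finite := (Set.finite_univ.prod hS).prod ((Set.finite_univ.prod hS).prod hD)
  have hedge : ∀ e ∈ Gr φ, e.1 = e.2.1 ∨ e ∈ F := by
    rintro ⟨a, b, d0⟩ ⟨c, hc, hec⟩
    obtain ⟨x, y, d, hcase⟩ := hec
    have hmemS : ∀ z : X, c.f z ≠ 0 → z ∈ S :=
      fun z hz => Set.mem_biUnion hc (Finsupp.mem_support_iff.mpr hz)
    have hmemD1 : c.bound ∈ D := Set.mem_biUnion hc (by simp)
    have hmemD2 : 2 * c.bound ∈ D := Set.mem_biUnion hc (by simp)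
    rcases hcase with ⟨hcf, he⟩ | ⟨hcf, he⟩ | ⟨hcf, he⟩ | ⟨hcf, he⟩ | ⟨hcf, he⟩
    · -- x - y ≤ d
      by_cases hxy : x = y
      · subst hxy
        rcases he with he | he <;> simp only [Prod.mk.injEq] at he <;>
          obtain ⟨rfl, rfl, rfl⟩ := he <;> exact Or.inl rfl
      · right
        have hx : x ∈ S := hmemS x (by
          rw [hcf]; simp [Finsupp.single_apply, hxy, Ne.symm hxy])
        have hy : y ∈ S := hmemS y (by
          rw [hcf]; simp [Finsupp.single_apply, hxy, Ne.symm hxy])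
        have hd : d ∈ D := by rw [hcf] at hmemD1; exact hmemD1
        rcases he with he | he <;> simp only [Prod.mk.injEq] at he <;>
          obtain ⟨rfl, rfl, rfl⟩ := he <;>
          exact ⟨⟨trivial, by assumption⟩, ⟨trivial, by assumption⟩, hd⟩
    · -- x + y ≤ d
      right
      have hx : x ∈ S := hmemS x (by
        rw [hcf]; simp [Finsupp.single_apply]; split <;> omega)
      have hy : y ∈ S := hmemS y (by
        rw [hcf]; simp [Finsupp.single_apply]; split <;> omega)
      have hd : d ∈ D := by rw [hcf] at hmemD1; exact hmemD1
      rcases he with he | he <;> simp only [Prod.mk.injEq] at he <;>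
        obtain ⟨rfl, rfl, rfl⟩ := he <;>
        exact ⟨⟨trivial, by assumption⟩, ⟨trivial, by assumption⟩, hd⟩
    · -- -x - y ≤ d
      right
      have hx : x ∈ S := hmemS x (by
        rw [hcf]; simp [Finsupp.single_apply]; split <;> omega)
      have hy : y ∈ S := hmemS y (by
        rw [hcf]; simp [Finsupp.single_apply]; split <;> omega)
      have hd : d ∈ D := by rw [hcf] at hmemD1; exact hmemD1
      rcases he with he | he <;> simp only [Prod.mk.injEq] at he <;>
        obtain ⟨rfl, rfl, rfl⟩ := he <;>
        exact ⟨⟨trivial, by assumption⟩, ⟨trivial, by assumption⟩, hd⟩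
    · -- x ≤ d
      right
      have hx : x ∈ S := hmemS x (by rw [hcf]; simp)
      have hd : 2 * d ∈ D := by rw [hcf] at hmemD2; exact hmemD2
      simp only [Prod.mk.injEq] at he
      obtain ⟨rfl, rfl, rfl⟩ := he
      exact ⟨⟨trivial, hx⟩, ⟨trivial, hx⟩, hd⟩
    · -- -x ≤ d
      right
      have hx : x ∈ S := hmemS x (by rw [hcf]; simp)
      have hd : 2 * d ∈ D := by rw [hcf] at hmemD2; exact hmemD2
      simp only [Prod.mk.injEq] at he
      obtain ⟨rfl, rfl, rfl⟩ := he
      exact ⟨⟨trivial, hx⟩, ⟨trivial, hx⟩, hd⟩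
  -- now the boundedness
  intro u v
  refine ⟨∑ e ∈ hF.toFinset, min e.2.2 0, ?_⟩
  rintro w ⟨p, hp, rfl⟩
  obtain ⟨q, hq, hwq, hnd⟩ := hp.reduce hnnc
  have hndq : q.Nodup := hnd.of_map _
  have hsum : pweight q = ∑ e ∈ q.toFinset, e.2.2 := by
    rw [pweight, ← List.sum_toFinset _ hndq]
  have hloop : ∀ e ∈ q.toFinset, e.1 = e.2.1 → 0 ≤ e.2.2 := by
    rintro ⟨a, b, d⟩ he hl
    simp only at hl
    subst hl
    have hmem : (a, a, d) ∈ Gr φ := hq.mem_edges _ (List.mem_toFinset.mp he)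
    have := hnnc a [(a, a, d)] (IsPath.single hmem)
    simpa [pweight] using this
  have hsplit := Finset.sum_filter_add_sum_filter_not q.toFinset
    (fun e => e.1 = e.2.1) (fun e => e.2.2)
  have h1 : 0 ≤ ∑ e ∈ q.toFinset.filter (fun e => e.1 = e.2.1), e.2.2 :=
    Finset.sum_nonneg (fun e he => hloop e (Finset.mem_filter.mp he).1
      (Finset.mem_filter.mp he).2)
  have hsubF : q.toFinset.filter (fun e => ¬ e.1 = e.2.1) ⊆ hF.toFinset := by
    intro e he
    obtain ⟨hq', hnl⟩ := Finset.mem_filter.mp he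
    rcases hedge e (hq.mem_edges _ (List.mem_toFinset.mp hq')) with h | h
    · exact absurd h hnl
    · exact hF.mem_toFinset.mpr h
  have h2 : ∑ e ∈ hF.toFinset, min e.2.2 0
      ≤ ∑ e ∈ q.toFinset.filter (fun e => ¬ e.1 = e.2.1), min e.2.2 0 := by
    have hg : ∑ e ∈ q.toFinset.filter (fun e => ¬ e.1 = e.2.1), -(min e.2.2 0)
        ≤ ∑ e ∈ hF.toFinset, -(min e.2.2 0) :=
      Finset.sum_le_sum_of_subset_of_nonneg hsubF
        (fun e _ _ => neg_nonneg.mpr (min_le_right _ _))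
    rw [Finset.sum_neg_distrib, Finset.sum_neg_distrib] at hg
    exact neg_le_neg_iff.mp hg
  have h3 : ∑ e ∈ q.toFinset.filter (fun e => ¬ e.1 = e.2.1), min e.2.2 0
      ≤ ∑ e ∈ q.toFinset.filter (fun e => ¬ e.1 = e.2.1), e.2.2 :=
    Finset.sum_le_sum (fun e _ => min_le_left _ _)
  linarith

end Base
/-! ### Pinning all variables and extracting an integer model -/
section Model
variable {X : Type*}

lemma IsPath.head_eq {V : Type*} {E : Set (V × V × ℤ)} {u v : V}
    {e : V × V × ℤ} {p : List (V × V × ℤ)} (h : IsPath E u (e :: p) v) :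
    e.1 = u := by cases h; rfl

lemma pin_all {E : Set (Vtx X × Vtx X × ℤ)} (hE : GoodE E) (T : Finset X) :
    ∃ (E' : Set (Vtx X × Vtx X × ℤ)) (π : X → ℤ),
      E ⊆ E' ∧ GoodE E' ∧
      ∀ x ∈ T, ((false, x), (true, x), 2 * π x) ∈ E' ∧
        ((true, x), (false, x), -(2 * π x)) ∈ E' := by
  classical
  induction T using Finset.induction_on with
  | empty => exact ⟨E, fun _ => 0, le_refl _, hE, by simp⟩
  | @insert x T hx ih =>
    obtain ⟨E₁, π₁, hsub₁, hE₁, hpin₁⟩ := ih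
    obtain ⟨m, hev, hE₂⟩ := goodE_pin hE₁ ((false, x) : Vtx X)
    obtain ⟨k, hk⟩ := hev
    refine ⟨insert ((false, x), vneg (false, x), m)
        (insert (vneg (false, x), (false, x), -m) E₁),
      Function.update π₁ x k, ?_, hE₂, ?_⟩
    · exact fun e he => Set.mem_insert_of_mem _ (Set.mem_insert_of_mem _ (hsub₁ he))
    · intro z hz
      rcases Finset.mem_insert.mp hz with rfl | hzT
      · have h2k : 2 * Function.update π₁ z k z = m := by
          rw [Function.update_self]; omega
        constructor
        · rw [h2k]
          exact Set.mem_insert _ _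
        · rw [h2k]
          exact Set.mem_insert_of_mem _ (Set.mem_insert _ _)
      · have hzx : z ≠ x := fun h => hx (h ▸ hzT)
        rw [Function.update_of_ne hzx]
        obtain ⟨h1, h2⟩ := hpin₁ z hzT
        exact ⟨Set.mem_insert_of_mem _ (Set.mem_insert_of_mem _ h1),
          Set.mem_insert_of_mem _ (Set.mem_insert_of_mem _ h2)⟩

/-- The four-edge cycle inequality. -/
lemma edge_ineq {E' : Set (Vtx X × Vtx X × ℤ)} (hE' : GoodE E')
    {p q : Vtx X} {w a b : ℤ}
    (he : (p, q, w) ∈ E') (hp : (vneg p, p, a) ∈ E') (hq : (q, vneg q, b) ∈ E') :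
    0 ≤ a + w + b + w := by
  have hsymm : (vneg q, vneg p, w) ∈ E' := hE'.sym _ _ _ he
  have hcyc : IsPath E' (vneg p)
      [(vneg p, p, a), (p, q, w), (q, vneg q, b), (vneg q, vneg p, w)] (vneg p) :=
    IsPath.cons hp (IsPath.cons he (IsPath.cons hq
      (IsPath.cons hsymm (IsPath.nil _))))
  have h0 := hE'.nonneg _ _ hcyc
  simp only [pweight, List.map_cons, List.map_nil, List.sum_cons, List.sum_nil] at h0
  omega

lemma sat_of_noOddZero (φ : Set (UC X)) (hwf : ∀ c ∈ φ, c.IsUTVPI)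
    (hfin : φ.Finite) (hnnc : NoNegCycle (Gr φ)) (hinv : NoOddZero (Gr φ)) :
    SatZ φ := by
  classical
  have hGood : GoodE (Gr φ) := ⟨symE_Gr φ, hnnc, bddAll_Gr φ hfin hnnc, hinv⟩
  obtain ⟨E', π, hsub, hE', hpin⟩ :=
    pin_all hGood (hfin.toFinset.biUnion fun c => c.f.support)
  refine ⟨π, ?_⟩
  intro c hc
  obtain ⟨a, b, x, y, ha, hb, hf⟩ := hwf c hc
  have hmemT : ∀ z : X, c.f z ≠ 0 →
      z ∈ hfin.toFinset.biUnion fun c => c.f.support :=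
    fun z hz => Finset.mem_biUnion.mpr
      ⟨c, hfin.mem_toFinset.mpr hc, Finsupp.mem_support_iff.mpr hz⟩
  have hsum : (c.f.sum fun z t => t * π z) = a * π x + b * π y := by
    rw [hf, Finsupp.sum_add_index' (fun z => zero_mul (π z))
      (fun z t₁ t₂ => add_mul t₁ t₂ (π z)),
      Finsupp.sum_single_index (zero_mul (π x)),
      Finsupp.sum_single_index (zero_mul (π y))]
  rw [UC.holds, hsum]
  obtain ⟨cf, cb⟩ := c
  simp only at hf hsum ⊢
  -- helper to get a loop-based `0 ≤ cb`
  have hloop : ∀ z : X, cf = 0 → (0 : ℤ) ≤ cb := by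
    intro z h0
    have hceq : (⟨cf, cb⟩ : UC X) = ⟨Finsupp.single z 1 - Finsupp.single z 1, cb⟩ := by
      simp [UC.mk.injEq, h0]
    have hedge : ((true, z), (true, z), cb) ∈ Gr φ :=
      ⟨⟨cf, cb⟩, hc, z, z, cb, Or.inl ⟨hceq, Or.inl rfl⟩⟩
    have := hnnc (true, z) [((true, z), (true, z), cb)] (IsPath.single hedge)
    simpa [pweight] using this
  rcases ha with rfl | rfl | rfl <;> rcases hb with rfl | rfl | rfl
  · -- a = -1, b = -1 : -x - y ≤ d
    have hceq : (⟨cf, cb⟩ : UC X)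
        = ⟨-Finsupp.single x 1 - Finsupp.single y 1, cb⟩ := by
      simp [UC.mk.injEq, hf, Finsupp.single_neg, sub_eq_add_neg, add_comm]
    have hedge : ((true, y), (false, x), cb) ∈ E' :=
      hsub ⟨⟨cf, cb⟩, hc, x, y, cb, Or.inr (Or.inr (Or.inl ⟨hceq, Or.inl rfl⟩))⟩
    have hxS := hmemT x (by rw [hf]; simp [Finsupp.single_apply]; split <;> omega)
    have hyS := hmemT y (by rw [hf]; simp [Finsupp.single_apply]; split <;> omega)
    have hpx := (hpin x hxS).1
    have hpy := (hpin y hyS).1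
    have := edge_ineq hE' hedge
      (by simpa [vneg] using hpy) (by simpa [vneg] using hpx)
    omega
  · -- a = -1, b = 0 : -x ≤ d
    have hceq : (⟨cf, cb⟩ : UC X) = ⟨-Finsupp.single x 1, cb⟩ := by
      simp [UC.mk.injEq, hf, Finsupp.single_neg]
    have hedge : ((true, x), (false, x), 2 * cb) ∈ E' :=
      hsub ⟨⟨cf, cb⟩, hc, x, y, cb, Or.inr (Or.inr (Or.inr (Or.inr ⟨hceq, rfl⟩)))⟩
    have hxS := hmemT x (by rw [hf]; simp)
    have hpx := (hpin x hxS).1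
    have := edge_ineq hE' hedge
      (by simpa [vneg] using hpx) (by simpa [vneg] using hpx)
    omega
  · -- a = -1, b = 1 : y - x ≤ d
    by_cases hxy : x = y
    · subst hxy
      have h0 : cf = 0 := by rw [hf]; simp [Finsupp.single_neg]
      have := hloop x h0
      omega
    · have hceq : (⟨cf, cb⟩ : UC X)
          = ⟨Finsupp.single y 1 - Finsupp.single x 1, cb⟩ := by
        simp [UC.mk.injEq, hf, Finsupp.single_neg, sub_eq_add_neg, add_comm]
      have hedge : ((true, x), (true, y), cb) ∈ E' :=
        hsub ⟨⟨cf, cb⟩, hc, y, x, cb, Or.inl ⟨hceq, Or.inl rfl⟩⟩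
      have hxS := hmemT x (by
        rw [hf]; simp [Finsupp.single_apply, hxy, Ne.symm hxy])
      have hyS := hmemT y (by
        rw [hf]; simp [Finsupp.single_apply, hxy, Ne.symm hxy])
      have hpx := (hpin x hxS).1
      have hpy := (hpin y hyS).2
      have := edge_ineq hE' hedge
        (by simpa [vneg] using hpx) (by simpa [vneg] using hpy)
      omega
  · -- a = 0, b = -1 : -y ≤ d
    have hceq : (⟨cf, cb⟩ : UC X) = ⟨-Finsupp.single y 1, cb⟩ := by
      simp [UC.mk.injEq, hf, Finsupp.single_neg]
    have hedge : ((true, y), (false, y), 2 * cb) ∈ E' :=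
      hsub ⟨⟨cf, cb⟩, hc, y, x, cb, Or.inr (Or.inr (Or.inr (Or.inr ⟨hceq, rfl⟩)))⟩
    have hyS := hmemT y (by rw [hf]; simp)
    have hpy := (hpin y hyS).1
    have := edge_ineq hE' hedge
      (by simpa [vneg] using hpy) (by simpa [vneg] using hpy)
    omega
  · -- a = 0, b = 0 : 0 ≤ d
    have h0 : cf = 0 := by rw [hf]; simp
    have := hloop x h0
    omega
  · -- a = 0, b = 1 : y ≤ d
    have hceq : (⟨cf, cb⟩ : UC X) = ⟨Finsupp.single y 1, cb⟩ := by
      simp [UC.mk.injEq, hf]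
    have hedge : ((false, y), (true, y), 2 * cb) ∈ E' :=
      hsub ⟨⟨cf, cb⟩, hc, y, x, cb, Or.inr (Or.inr (Or.inr (Or.inl ⟨hceq, rfl⟩)))⟩
    have hyS := hmemT y (by rw [hf]; simp)
    have hpy := (hpin y hyS).2
    have := edge_ineq hE' hedge
      (by simpa [vneg] using hpy) (by simpa [vneg] using hpy)
    omega
  · -- a = 1, b = -1 : x - y ≤ d
    by_cases hxy : x = y
    · subst hxy
      have h0 : cf = 0 := by rw [hf]; simp [Finsupp.single_neg]
      have := hloop x h0
      omega
    · have hceq : (⟨cf, cb⟩ : UC X)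
          = ⟨Finsupp.single x 1 - Finsupp.single y 1, cb⟩ := by
        simp [UC.mk.injEq, hf, Finsupp.single_neg, sub_eq_add_neg]
      have hedge : ((true, y), (true, x), cb) ∈ E' :=
        hsub ⟨⟨cf, cb⟩, hc, x, y, cb, Or.inl ⟨hceq, Or.inl rfl⟩⟩
      have hxS := hmemT x (by
        rw [hf]; simp [Finsupp.single_apply, hxy, Ne.symm hxy])
      have hyS := hmemT y (by
        rw [hf]; simp [Finsupp.single_apply, hxy, Ne.symm hxy])
      have hpx := (hpin x hxS).2
      have hpy := (hpin y hyS).1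
      have := edge_ineq hE' hedge
        (by simpa [vneg] using hpy) (by simpa [vneg] using hpx)
      omega
  · -- a = 1, b = 0 : x ≤ d
    have hceq : (⟨cf, cb⟩ : UC X) = ⟨Finsupp.single x 1, cb⟩ := by
      simp [UC.mk.injEq, hf]
    have hedge : ((false, x), (true, x), 2 * cb) ∈ E' :=
      hsub ⟨⟨cf, cb⟩, hc, x, y, cb, Or.inr (Or.inr (Or.inr (Or.inl ⟨hceq, rfl⟩)))⟩
    have hxS := hmemT x (by rw [hf]; simp)
    have hpx := (hpin x hxS).2
    have := edge_ineq hE' hedge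
      (by simpa [vneg] using hpx) (by simpa [vneg] using hpx)
    omega
  · -- a = 1, b = 1 : x + y ≤ d
    have hceq : (⟨cf, cb⟩ : UC X)
        = ⟨Finsupp.single x 1 + Finsupp.single y 1, cb⟩ := by
      simp [UC.mk.injEq, hf]
    have hedge : ((false, y), (true, x), cb) ∈ E' :=
      hsub ⟨⟨cf, cb⟩, hc, x, y, cb, Or.inr (Or.inl ⟨hceq, Or.inl rfl⟩)⟩
    have hxS := hmemT x (by rw [hf]; simp [Finsupp.single_apply]; split <;> omega)
    have hyS := hmemT y (by rw [hf]; simp [Finsupp.single_apply]; split <;> omega)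
    have hpx := (hpin x hxS).2
    have hpy := (hpin y hyS).2
    have := edge_ineq hE' hedge
      (by simpa [vneg] using hpy) (by simpa [vneg] using hpx)
    omega

end Model
/-- If `G_φ` has no negative weight cycle but `φ` (finite) is
unsatisfiable in ℤ, then `G_φ` contains a zero weight cycle containing two
vertices `u` and `-u` such that `wSP(u, -u)` is odd. -/
theorem zero_cycle_with_odd_wSP_of_unsatZ {X : Type*}
    (φ : Set (UC X)) (hwf : ∀ c ∈ φ, c.IsUTVPI) (hfin : φ.Finite)
    (hnnc : NoNegCycle (Gr φ)) (hunsat : ¬ SatZ φ) :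
    ∃ (u a : Vtx X) (p : List (Vtx X × Vtx X × ℤ)),
      IsPath (Gr φ) a p a ∧ p ≠ [] ∧ pweight p = 0 ∧
      u ∈ p.map (fun e => e.1) ∧ vneg u ∈ p.map (fun e => e.1) ∧
      ∃ t : ℤ, wSP (Gr φ) u (vneg u) = (t : WithTop ℤ) ∧ Odd t := by
  by_cases hinv : NoOddZero (Gr φ)
  · exact absurd (sat_of_noOddZero φ hwf hfin hnnc hinv) hunsat
  rw [NoOddZero] at hinv
  push_neg at hinv
  obtain ⟨u, t, ht, h1, h2, -⟩ := hinv
  obtain ⟨hne1, hbd1, hinf1⟩ := wSP_eq_coe_elim h1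
  obtain ⟨p, hp, hwp⟩ := Int.csInf_mem hne1 hbd1
  rw [hinf1] at hwp
  obtain ⟨hne2, hbd2, hinf2⟩ := wSP_eq_coe_elim h2
  obtain ⟨q, hq, hwq⟩ := Int.csInf_mem hne2 hbd2
  rw [hinf2] at hwq
  obtain ⟨j, hj⟩ := ht
  have hpne : p ≠ [] := by
    intro h; subst h; rw [pweight_nil] at hwp; omega
  have hqne : q ≠ [] := by
    intro h; subst h; rw [pweight_nil] at hwq; omega
  refine ⟨u, u, p ++ q, hp.append hq, by simp [hpne], ?_, ?_, ?_, t, h1, ⟨j, hj⟩⟩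
  · rw [pweight_append]; omega
  · obtain ⟨e, p', rfl⟩ := List.exists_cons_of_ne_nil hpne
    have he := hp.head_eq
    rw [List.cons_append, List.map_cons, he]
    exact List.mem_cons_self
  · obtain ⟨f, q', rfl⟩ := List.exists_cons_of_ne_nil hqne
    have hf := hq.head_eq
    rw [List.map_append, List.map_cons, hf]
    exact List.mem_append_right _ List.mem_cons_self

end UTVPIPaper
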